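/- Let J be the 3×3 symmetric matrices over a field F of characteristic 0. Suppose x ∈ J has trace 0 and adj(x) = 0, and z ∈ J satisfies tr(z·x) = 0 and tr(adj(z)·x) = 0. Set y = z × x. Then: (1) tr(y) = 0; (2) adj(y) = 0; (3) tr(x²) = tr(x·y) = tr(y²) = 0; and (4) x × y = 0. -/
import Mathlib


open Matrix

/-- The Freudenthal cross product of 3×3 matrices: `A × B = adj(A+B) − adj A − adj B`. -/
def freudenthalCross {F : Type*} [CommRing F] (A B : Matrix (Fin 3) (Fin 3) F) :
    Matrix (Fin 3) (Fin 3) F :=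
  (A + B).adjugate - A.adjugate - B.adjugate

section Aux

variable {R : Type*} [CommRing R]

/-- 3×3 adjugate formula: `adj A = A² - (tr A)·A + (tr adj A)·1`. -/
lemma adj_eq3 (A : Matrix (Fin 3) (Fin 3) R) :
    A.adjugate = A * A - A.trace • A + (A.adjugate).trace • (1 : Matrix (Fin 3) (Fin 3) R) := by
  ext i j
  fin_cases i <;> fin_cases j <;>
    simp [adjugate_fin_three, trace_fin_three, Matrix.mul_apply, Fin.sum_univ_three,
      Matrix.one_apply] <;> ring

/-- `2 tr(adj A) = (tr A)² − tr(A²)` for 3×3 matrices. -/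
lemma sigma2_eq3 (A : Matrix (Fin 3) (Fin 3) R) :
    2 * (A.adjugate).trace = A.trace ^ 2 - (A * A).trace := by
  simp [adjugate_fin_three, trace_fin_three, Matrix.mul_apply, Fin.sum_univ_three]
  ring

/-- Explicit formula for the Freudenthal cross product. -/
lemma cross_eq3 (A B : Matrix (Fin 3) (Fin 3) R) :
    freudenthalCross A B =
      A * B + B * A - A.trace • B - B.trace • A +
        (A.trace * B.trace - (A * B).trace) • (1 : Matrix (Fin 3) (Fin 3) R) := by
  unfold freudenthalCross
  ext i j
  fin_cases i <;> fin_cases j <;>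
    simp [adjugate_fin_three, trace_fin_three, Matrix.mul_apply, Fin.sum_univ_three,
      Matrix.one_apply] <;> ring

set_option maxHeartbeats 2000000 in
/-- Polarized Cayley–Hamilton for 3×3 matrices. -/
lemma polCH3 (A B : Matrix (Fin 3) (Fin 3) R) :
    A * B * A + A * A * B + B * (A * A) - B.trace • (A * A) - A.trace • (A * B + B * A)
      + (A.trace * B.trace - (A * B).trace) • A + (A.adjugate).trace • B
      - (A.adjugate * B).trace • (1 : Matrix (Fin 3) (Fin 3) R) = 0 := by
  ext i j
  fin_cases i <;> fin_cases j <;>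
    simp [adjugate_fin_three, trace_fin_three, Matrix.mul_apply, Fin.sum_univ_three,
      Matrix.one_apply, Matrix.vecMul, dotProduct] <;> ring

end Aux

/-- If `x` is a trace-zero symmetric 3×3 matrix of rank at most one (`adj x = 0`),
and `z` is symmetric with `tr(zx) = 0` and `tr(adj(z)·x) = 0`, set `y = z × x`.
Then `tr y = 0`, `adj y = 0`, `tr(x²) = tr(xy) = tr(y²) = 0`, and `x × y = 0`. -/
theorem singular_isotropic_pair {F : Type*} [Field F] [CharZero F]
    (x z : Matrix (Fin 3) (Fin 3) F)
    (hx : x.IsSymm) (hz : z.IsSymm)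
    (htrx : x.trace = 0) (hadjx : x.adjugate = 0)
    (hzx : (z * x).trace = 0) (hadjzx : (z.adjugate * x).trace = 0)
    (y : Matrix (Fin 3) (Fin 3) F) (hy : y = freudenthalCross z x) :
    y.trace = 0 ∧ y.adjugate = 0 ∧
    (x * x).trace = 0 ∧ (x * y).trace = 0 ∧ (y * y).trace = 0 ∧
    freudenthalCross x y = 0 := by
  have hσx : (x.adjugate).trace = 0 := by rw [hadjx]; simp
  -- tr(x²) = 0
  have htrx2 : (x * x).trace = 0 := by
    have h := sigma2_eq3 x
    rw [htrx, hσx] at h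
    linear_combination h
  -- x² = 0
  have hx2 : x * x = 0 := by
    have h := adj_eq3 x
    rw [hσx, htrx, hadjx] at h
    simpa using h.symm
  have htrxz : (x * z).trace = 0 := by rw [trace_mul_comm]; exact hzx
  -- y = zx + xz - (tr z) x
  have hy' : y = z * x + x * z - z.trace • x := by
    rw [hy, cross_eq3, htrx, hzx]
    simp
  have htry : y.trace = 0 := by
    rw [hy']
    simp [trace_add, trace_sub, trace_smul, hzx, htrxz, htrx]
  -- tr(z²x) = 0
  have hz2x : (z * z * x).trace = 0 := by
    have h : (z.adjugate * x).trace =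
        (z * z * x).trace - z.trace * (z * x).trace + (z.adjugate).trace * x.trace := by
      conv_lhs => rw [adj_eq3 z]
      simp [sub_mul, add_mul, smul_mul_assoc, trace_sub, trace_add, trace_smul]
    rw [hadjzx, hzx, htrx] at h
    linear_combination -h
  -- x z x = 0
  have hxzx : x * z * x = 0 := by
    have h := polCH3 x z
    rw [hx2, htrx, htrxz, hadjx] at h
    simpa using h
  -- x z² x = 0
  have htxzz : (x * (z * z)).trace = 0 := by rw [trace_mul_comm]; exact hz2x
  have hxz2x : x * (z * z) * x = 0 := by
    have h := polCH3 x (z * z)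
    rw [hx2, htrx, htxzz, hadjx] at h
    simpa using h
  -- x y = 0 and y x = 0
  have hxy : x * y = 0 := by
    rw [hy', mul_sub, mul_add, mul_smul_comm, ← mul_assoc, ← mul_assoc, hxzx, hx2]
    simp
  have hyx : y * x = 0 := by
    rw [hy', sub_mul, add_mul, smul_mul_assoc, mul_assoc z x x, hx2, hxzx]
    simp
  have htrxy : (x * y).trace = 0 := by rw [hxy, trace_zero]
  -- y² = 0
  have hy2 : y * y = 0 := by
    have t1 : z * x * (z * x) = 0 := by
      rw [show z * x * (z * x) = z * (x * z * x) by noncomm_ring, hxzx, mul_zero]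
    have t2 : z * x * (x * z) = 0 := by
      rw [show z * x * (x * z) = z * (x * x) * z by noncomm_ring, hx2, mul_zero, zero_mul]
    have t3 : x * z * (z * x) = 0 := by
      rw [show x * z * (z * x) = x * (z * z) * x by noncomm_ring, hxz2x]
    have t4 : x * z * (x * z) = 0 := by
      rw [show x * z * (x * z) = x * z * x * z by noncomm_ring, hxzx, zero_mul]
    have t5 : z * x * x = 0 := by rw [mul_assoc, hx2, mul_zero]
    have t7 : x * (z * x) = 0 := by rw [← mul_assoc, hxzx]
    have t8 : x * (x * z) = 0 := by rw [← mul_assoc, hx2, zero_mul]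
    rw [hy']
    simp only [mul_sub, sub_mul, mul_add, add_mul, smul_mul_assoc, mul_smul_comm, smul_smul,
      t1, t2, t3, t4, t5, t7, t8, hxzx, hx2]
    simp
  have htryy : (y * y).trace = 0 := by rw [hy2, trace_zero]
  -- adj y = 0
  have hσy : (y.adjugate).trace = 0 := by
    have h := sigma2_eq3 y
    rw [htry, hy2, trace_zero] at h
    linear_combination h / 2
  have hadjy : y.adjugate = 0 := by
    have h := adj_eq3 y
    rw [hy2, htry, hσy] at h
    simpa using h
  -- x × y = 0
  have hcross : freudenthalCross x y = 0 := by
    rw [cross_eq3, hxy, hyx, htrx, htry, trace_zero]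
    simp
  exact ⟨htry, hadjy, htrx2, htrxy, htryy, hcross⟩
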